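/- Let I = (𝔼, D, c, f) be a CMP instance whose objective f is of type sum, product, or bottleneck, and let e ∈ 𝔼 be an element that lies in every optimal solution of I. Then l'(I,e) ∈ {0, ∞}; moreover, if f is of type sum or of type product, then l'(I,e) = 0. -/

import Mathlib

open scoped ENNReal BigOperators

/-- Objective type of a combinatorial minimization problem:
sum, product, or bottleneck. -/
inductive ObjType where
  | sum : ObjType
  | prod : ObjType
  | bottleneck : ObjType
deriving DecidableEq

/-- The cost `f_c(S)` of a feasible solution `S` under cost function `c`:
the sum, the product, or the maximum (for nonempty `S`) of the element costs. -/
noncomputable def objCost {ι : Type*} (t : ObjType) (c : ι → ℝ) (S : Finset ι) : ℝ :=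
  match t with
  | ObjType.sum => ∑ e ∈ S, c e
  | ObjType.prod => ∏ e ∈ S, c e
  | ObjType.bottleneck => if h : S.Nonempty then S.sup' h c else 0

/-- The optimal objective value `f(I)` of the instance with feasible set `D`. -/
noncomputable def optVal {ι : Type*} (t : ObjType) (c : ι → ℝ) (D : Finset (Finset ι)) : ℝ :=
  if h : D.Nonempty then D.inf' h (objCost t c) else 0

/-- `S` is an optimal solution of the instance `(𝔼, D, c, f)`. -/
def isOpt {ι : Type*} (t : ObjType) (c : ι → ℝ) (D : Finset (Finset ι)) (S : Finset ι) : Prop :=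
  S ∈ D ∧ objCost t c S = optVal t c D

/-- `0 ≤ a < maxdec(e)`, where `maxdec(e) = ∞` for sum/bottleneck objectives and
`maxdec(e) = c(e)` for the product objective. -/
def decOK {ι : Type*} (t : ObjType) (c : ι → ℝ) (e : ι) (a : ℝ) : Prop :=
  0 ≤ a ∧ (t = ObjType.prod → a < c e)

/-- Extended single upper tolerance
`u'(I,e) = sup {α ≥ 0 : every optimal solution of I is optimal for I_{α,e}}` valued in `[0,∞]`. -/
noncomputable def uTol {ι : Type*} [DecidableEq ι] (t : ObjType) (c : ι → ℝ)
    (D : Finset (Finset ι)) (e : ι) : ℝ≥0∞ :=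
  sSup (ENNReal.ofReal '' {a : ℝ | 0 ≤ a ∧
    ∀ S : Finset ι, isOpt t c D S →
      isOpt t (fun x => if x = e then c x + a else c x) D S})

/-- Extended regular set upper tolerance `u'(I,E)`, valued in `[0,∞]`. -/
noncomputable def uTolSet {ι : Type*} [DecidableEq ι] (t : ObjType) (c : ι → ℝ)
    (D : Finset (Finset ι)) (E : Finset ι) : ℝ≥0∞ :=
  sSup (ENNReal.ofReal '' {a : ℝ |
    ∀ S : Finset ι, isOpt t c D S →
      ∃ α : ι → ℝ, (∀ x, 0 ≤ α x) ∧ (∀ x ∉ E, α x = 0) ∧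
        a = ∑ x ∈ E, α x ∧ isOpt t (fun x => c x + α x) D S})

/-- Extended reverse set upper tolerance `u_b'(I,E)`, valued in `[0,∞]` (`inf ∅ = ∞`). -/
noncomputable def uTolSetRev {ι : Type*} [DecidableEq ι] (t : ObjType) (c : ι → ℝ)
    (D : Finset (Finset ι)) (E : Finset ι) : ℝ≥0∞ :=
  sInf (ENNReal.ofReal '' {a : ℝ |
    ∃ S : Finset ι, isOpt t c D S ∧
      ∃ α : ι → ℝ, (∀ x, 0 ≤ α x) ∧ (∀ x ∉ E, α x = 0) ∧
        a = ∑ x ∈ E, α x ∧ ¬ isOpt t (fun x => c x + α x) D S})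

/-- New single lower tolerance
`l'(I,e) = sup {α : 0 ≤ α < maxdec(e), f(I_{−α,e}) = f(I)}`, valued in `[0,∞]`. -/
noncomputable def lTol {ι : Type*} [DecidableEq ι] (t : ObjType) (c : ι → ℝ)
    (D : Finset (Finset ι)) (e : ι) : ℝ≥0∞ :=
  sSup (ENNReal.ofReal '' {a : ℝ | decOK t c e a ∧
    optVal t (fun x => if x = e then c x - a else c x) D = optVal t c D})

/-- New regular set lower tolerance `l'(I,E)`, valued in `[0,∞]`. -/
noncomputable def lTolSet {ι : Type*} [DecidableEq ι] (t : ObjType) (c : ι → ℝ)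
    (D : Finset (Finset ι)) (E : Finset ι) : ℝ≥0∞ :=
  sSup (ENNReal.ofReal '' {a : ℝ |
    ∃ α : ι → ℝ, (∀ x ∈ E, decOK t c x (α x)) ∧ (∀ x ∉ E, α x = 0) ∧
      a = ∑ x ∈ E, α x ∧ optVal t (fun x => c x - α x) D = optVal t c D})

/-- New reverse set lower tolerance `l_b'(I,E)`, valued in `[0,∞]` (`inf ∅ = ∞`). -/
noncomputable def lTolSetRev {ι : Type*} [DecidableEq ι] (t : ObjType) (c : ι → ℝ)
    (D : Finset (Finset ι)) (E : Finset ι) : ℝ≥0∞ :=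
  sInf (ENNReal.ofReal '' {a : ℝ |
    ∃ α : ι → ℝ, (∀ x ∈ E, decOK t c x (α x)) ∧ (∀ x ∉ E, α x = 0) ∧
      a = ∑ x ∈ E, α x ∧ optVal t (fun x => c x - α x) D < optVal t c D})

/-!
Let `S₀` be an optimal solution; it contains `e`. For a sum or product objective, lowering `c e`
by any `α > 0` strictly lowers the cost of `S₀`, hence the optimal value, so `l'(I,e) = 0`.
For a bottleneck objective, suppose some `α > 0` keeps the optimal value `f`. Since
`c e ≤ f`, every feasible `T` then attains its bottleneck value `≥ f` at an element other than
`e`, so no further decrease of `c e` can lower it; thus every `α ≥ 0` keeps `f` and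
`l'(I,e) = ∞`.
-/

section

variable {ι : Type*} {t : ObjType} {c d : ι → ℝ} {D : Finset (Finset ι)} {S : Finset ι}

theorem optVal_le_objCost (hS : S ∈ D) : optVal t c D ≤ objCost t c S := by
  rw [optVal, dif_pos ⟨S, hS⟩]
  exact Finset.inf'_le _ hS

theorem le_optVal {a : ℝ} (hD : D.Nonempty) (h : ∀ S ∈ D, a ≤ objCost t c S) :
    a ≤ optVal t c D := by
  rw [optVal, dif_pos hD]
  exact Finset.le_inf' _ _ h

theorem exists_isOpt (hD : D.Nonempty) : ∃ S, isOpt t c D S := by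
  obtain ⟨S, hS, h⟩ := Finset.exists_mem_eq_inf' hD (objCost t c)
  exact ⟨S, hS, by rw [optVal, dif_pos hD, h]⟩

theorem optVal_lt_of_isOpt (hS : isOpt t c D S) (h : objCost t d S < objCost t c S) :
    optVal t d D < optVal t c D :=
  calc optVal t d D ≤ objCost t d S := optVal_le_objCost hS.1
    _ < objCost t c S := h
    _ = optVal t c D := hS.2

theorem le_objCost_bottleneck {x : ι} (hx : x ∈ S) : c x ≤ objCost .bottleneck c S := by
  rw [objCost, dif_pos ⟨x, hx⟩]
  exact Finset.le_sup' c hx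

theorem objCost_bottleneck_mono (h : ∀ x ∈ S, c x ≤ d x) :
    objCost .bottleneck c S ≤ objCost .bottleneck d S := by
  unfold objCost
  split_ifs with hS
  · exact Finset.sup'_le _ _ fun x hx => (h x hx).trans (Finset.le_sup' d hx)
  · exact le_rfl

end

section

variable {ι : Type*} [DecidableEq ι] {t : ObjType} {c : ι → ℝ} {D : Finset (Finset ι)}
  {S T : Finset ι} {e : ι} {a b : ℝ}

/-- The costs of the perturbed instance `I_{-a,e}`. -/
def decAt (c : ι → ℝ) (e : ι) (a : ℝ) : ι → ℝ := fun x => if x = e then c x - a else c x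

theorem decAt_self : decAt c e a e = c e - a := if_pos rfl

theorem decAt_of_ne {x : ι} (hx : x ≠ e) : decAt c e a x = c x := if_neg hx

theorem decAt_le (ha : 0 ≤ a) (x : ι) : decAt c e a x ≤ c x := by
  unfold decAt
  split_ifs <;> linarith

theorem sum_decAt (he : e ∈ S) : ∑ x ∈ S, decAt c e a x = ∑ x ∈ S, c x - a := by
  rw [← Finset.add_sum_erase _ _ he, ← Finset.add_sum_erase S c he, decAt_self,
    Finset.sum_congr rfl fun x hx => decAt_of_ne (Finset.ne_of_mem_erase hx)]
  ring

theorem prod_decAt (he : e ∈ S) :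
    ∏ x ∈ S, decAt c e a x = (c e - a) * ∏ x ∈ S.erase e, c x := by
  rw [← Finset.mul_prod_erase _ _ he, decAt_self,
    Finset.prod_congr rfl fun x hx => decAt_of_ne (Finset.ne_of_mem_erase hx)]

theorem objCost_decAt_lt (ht : t = .sum ∨ t = .prod) (hpos : t = .prod → ∀ x, 0 < c x)
    (he : e ∈ S) (ha : 0 < a) : objCost t (decAt c e a) S < objCost t c S := by
  rcases ht with rfl | rfl
  · simp only [objCost, sum_decAt he]
    linarith
  · simp only [objCost, prod_decAt he, ← Finset.mul_prod_erase S c he]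
    exact mul_lt_mul_of_pos_right (by linarith) (Finset.prod_pos fun x _ => hpos rfl x)

-- The maximum is attained away from `e`, so the cost of `e` no longer matters.
theorem objCost_bottleneck_decAt_le (h : c e - a < objCost .bottleneck (decAt c e a) T) :
    objCost .bottleneck (decAt c e a) T ≤ objCost .bottleneck (decAt c e b) T := by
  unfold objCost at *
  split_ifs at * with hT
  · obtain ⟨x, hxT, hx⟩ := Finset.exists_mem_eq_sup' hT (decAt c e a)
    have hxe : x ≠ e := by
      rintro rfl
      rw [hx, decAt_self] at h
      exact lt_irrefl _ h
    rw [hx, decAt_of_ne hxe, ← decAt_of_ne (c := c) (a := b) hxe]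
    exact Finset.le_sup' (decAt c e b) hxT
  · exact le_rfl

theorem optVal_bottleneck_decAt_eq (hS : isOpt .bottleneck c D S) (he : e ∈ S) (ha : 0 < a)
    (heq : optVal .bottleneck (decAt c e a) D = optVal .bottleneck c D) (hb : 0 ≤ b) :
    optVal .bottleneck (decAt c e b) D = optVal .bottleneck c D := by
  have hce : c e ≤ optVal .bottleneck c D := hS.2 ▸ le_objCost_bottleneck he
  apply le_antisymm
  · calc optVal .bottleneck (decAt c e b) D ≤ objCost .bottleneck (decAt c e b) S :=
          optVal_le_objCost hS.1
      _ ≤ objCost .bottleneck c S := objCost_bottleneck_mono fun x _ => decAt_le hb x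
      _ = optVal .bottleneck c D := hS.2
  · refine le_optVal ⟨S, hS.1⟩ fun T hT => ?_
    have hfT : optVal .bottleneck c D ≤ objCost .bottleneck (decAt c e a) T :=
      heq ▸ optVal_le_objCost hT
    exact hfT.trans (objCost_bottleneck_decAt_le (by linarith))

theorem lTol_eq_zero_of_nonpos
    (h : ∀ a, decOK t c e a → optVal t (decAt c e a) D = optVal t c D → a ≤ 0) :
    lTol t c D e = 0 := by
  refine le_antisymm (sSup_le ?_) bot_le
  rintro _ ⟨a, ⟨ha, heq⟩, rfl⟩
  exact (ENNReal.ofReal_eq_zero.mpr (h a ha heq)).le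

theorem lTol_eq_top_of_forall
    (h : ∀ b, 0 ≤ b → decOK t c e b ∧ optVal t (decAt c e b) D = optVal t c D) :
    lTol t c D e = ⊤ := by
  rw [lTol, sSup_eq_top]
  intro y hy
  refine ⟨ENNReal.ofReal (y.toReal + 1), ⟨_, h _ (by positivity), rfl⟩, ?_⟩
  rw [ENNReal.lt_ofReal_iff_toReal_lt hy.ne]
  linarith

theorem lTol_eq_zero_of_sum_or_prod (ht : t = .sum ∨ t = .prod)
    (hpos : t = .prod → ∀ x, 0 < c x) (hS : isOpt t c D S) (he : e ∈ S) :
    lTol t c D e = 0 := by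
  refine lTol_eq_zero_of_nonpos fun a _ heq => ?_
  by_contra! ha
  exact (optVal_lt_of_isOpt hS (objCost_decAt_lt ht hpos he ha)).ne heq

theorem lTol_bottleneck_eq_zero_or_top (hS : isOpt .bottleneck c D S) (he : e ∈ S) :
    lTol .bottleneck c D e = 0 ∨ lTol .bottleneck c D e = ⊤ := by
  by_cases hex : ∃ a, 0 < a ∧ optVal .bottleneck (decAt c e a) D = optVal .bottleneck c D
  · obtain ⟨a, ha, heq⟩ := hex
    exact Or.inr <| lTol_eq_top_of_forall fun b hb =>
      ⟨⟨hb, nofun⟩, optVal_bottleneck_decAt_eq hS he ha heq hb⟩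
  · exact Or.inl <| lTol_eq_zero_of_nonpos fun a _ heq => le_of_not_gt fun ha => hex ⟨a, ha, heq⟩

end

theorem lsi_inside_zero_or_top_general {ι : Type*} [DecidableEq ι]
    (t : ObjType) (c : ι → ℝ) (D : Finset (Finset ι))
    (hD : D.Nonempty)
    (hpos : t = ObjType.prod → ∀ x, 0 < c x)
    (e : ι) (he : ∀ S : Finset ι, isOpt t c D S → e ∈ S) :
    (lTol t c D e = 0 ∨ lTol t c D e = ⊤) ∧
      ((t = ObjType.sum ∨ t = ObjType.prod) → lTol t c D e = 0) := by
  obtain ⟨S, hS⟩ := exists_isOpt (t := t) (c := c) hD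
  have hzero : (t = .sum ∨ t = .prod) → lTol t c D e = 0 :=
    fun ht => lTol_eq_zero_of_sum_or_prod ht hpos hS (he S hS)
  refine ⟨?_, hzero⟩
  cases t with
  | sum => exact Or.inl (hzero (Or.inl rfl))
  | prod => exact Or.inl (hzero (Or.inr rfl))
  | bottleneck => exact lTol_bottleneck_eq_zero_or_top hS (he S hS)

/-- Theorem 5(a): if `e` lies in every optimal solution, then
`l'(I,e) ∈ {0, ∞}`; moreover, for sum or product objectives `l'(I,e) = 0`. -/
theorem lsi_inside_zero_or_top {ι : Type*} [Fintype ι] [DecidableEq ι]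
    (t : ObjType) (c : ι → ℝ) (D : Finset (Finset ι))
    (hD : D.Nonempty) (hSne : ∀ S ∈ D, S.Nonempty)
    (hpos : t = ObjType.prod → ∀ x, 0 < c x)
    (e : ι) (he : ∀ S : Finset ι, isOpt t c D S → e ∈ S) :
    (lTol t c D e = 0 ∨ lTol t c D e = ⊤) ∧
      ((t = ObjType.sum ∨ t = ObjType.prod) → lTol t c D e = 0) :=
  lsi_inside_zero_or_top_general t c D hD hpos e he
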